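/- Let G be a broken wheel with principal path P = p₀ q p₁ (so q is the vertex adjacent to all others) and let L be a list-assignment for G with |L(v)| ≥ 3 for every v ∈ V(G) \ {p₀, q, p₁} and with L(p₀), L(p₁) nonempty. Let i ∈ {0, 1} with |L(p_i)| ≥ 2, and suppose that no color of L(p_i) is (P, G)-universal, i.e., for every a ∈ L(p_i) there exist b ∈ L(q) \ {a} and c ∈ L(p₁₋ᵢ) \ {b} such that no L-coloring of G assigns a, b, c to p_i, q, p₁₋ᵢ respectively. Then either |V(G)| ≤ 4 or, letting p_i x y denote the initial 2-path of the path G − q starting at p_i, one has L(p_i) ⊆ L(x) ∩ L(y). -/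

import Mathlib

/-- Vertex type of a broken wheel whose hub-deleted path `p₀ u₁ … u_t p₁` has `t + 2`
vertices: `some i` is the `i`-th path vertex (so `some 0 = p₀` and
`some (Fin.last (t+1)) = p₁`), and `none` is the hub `q`. -/
abbrev BWVert (t : ℕ) := Option (Fin (t + 2))

/-- Adjacency in the broken wheel: the hub `q` is adjacent to every path vertex, and
two path vertices are adjacent exactly when they are consecutive. -/
def bwAdj (t : ℕ) : BWVert t → BWVert t → Prop
  | none, none => False
  | none, some _ => True
  | some _, none => True
  | some i, some j => i.val + 1 = j.val ∨ j.val + 1 = i.val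

/-- An `L`-coloring of (all of) the broken wheel. -/
def IsBWColoring (t : ℕ) (L : BWVert t → Finset ℕ) (c : BWVert t → ℕ) : Prop :=
  (∀ v, c v ∈ L v) ∧ ∀ v w, bwAdj t v w → c v ≠ c w

/-- `(a, b, cc)` is an `L`-coloring of the principal path `P = p₀ q p₁` (colors listed
in the order `p₀, q, p₁`); note that `p₀` and `p₁` are themselves adjacent exactly when
`t = 0`. -/
def IsPColoring (t : ℕ) (L : BWVert t → Finset ℕ) (a b cc : ℕ) : Prop :=
  a ∈ L (some 0) ∧ b ∈ L none ∧ cc ∈ L (some (Fin.last (t + 1))) ∧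
  a ≠ b ∧ b ≠ cc ∧ (bwAdj t (some 0) (some (Fin.last (t + 1))) → a ≠ cc)

/-- The coloring `a, b, cc` of `p₀, q, p₁` extends to an `L`-coloring of the whole
broken wheel. -/
def ExtendsToBW (t : ℕ) (L : BWVert t → Finset ℕ) (a b cc : ℕ) : Prop :=
  ∃ c : BWVert t → ℕ, IsBWColoring t L c ∧
    c (some 0) = a ∧ c none = b ∧ c (some (Fin.last (t + 1))) = cc


/-!
Fix the colours `a, b, c` of `p₀, q, p₁` and delete `b` from the lists of the path `G - q`:
every interior list keeps at least two colours, so the path can be coloured greedily starting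
from `p₁`, and this can only get stuck at the last two steps, at `u₂` or at `u₁`. Hence if
`(a, b, c)` does not extend, then `a ∈ L(u₁)`, `b ∈ L(u₂)` and `L(u₁) \ {a, b} ⊆ L(u₂)`.
Applying this to two different colours `a ≠ a'` of `L(p₀)` gives `L(p₀) ⊆ L(u₁) ∩ L(u₂)`;
the case of `p₁` follows by reversing the path.
-/

open Finset Function Fin.NatCast

lemma exists_mem_ne_ne {α : Type*} [DecidableEq α] {s : Finset α} (hs : 3 ≤ #s) (x y : α) :
    ∃ z ∈ s, z ≠ x ∧ z ≠ y := by
  obtain ⟨z, hz, hzy⟩ :=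
    exists_mem_ne (lt_of_lt_of_le (by omega) (pred_card_le_card_erase (s := s) (a := x))) y
  exact ⟨z, mem_of_mem_erase hz, ne_of_mem_erase hz, hzy⟩

/-- The end `n` of the path `m, m + 1, …, n` is precoloured: `f n` need not lie in `M n`. -/
def IsPathColoring (M : ℕ → Finset ℕ) (m n : ℕ) (f : ℕ → ℕ) : Prop :=
  ∀ k, m ≤ k → k < n → f k ∈ M k ∧ f k ≠ f (k + 1)

lemma IsPathColoring.update {M : ℕ → Finset ℕ} {m n x : ℕ} {f : ℕ → ℕ}
    (hf : IsPathColoring M (m + 1) n f) (hx : x ∈ M m) (hne : x ≠ f (m + 1)) :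
    IsPathColoring M m n (update f m x) := by
  intro k hmk hkn
  rcases hmk.eq_or_lt with rfl | hlt
  · rw [update_self, update_of_ne (by omega)]
    exact ⟨hx, hne⟩
  · rw [update_of_ne hlt.ne', update_of_ne (by omega)]
    exact hf k hlt hkn

lemma exists_isPathColoring {M : ℕ → Finset ℕ} {m n : ℕ} (hmn : m ≤ n)
    (hM : ∀ k, m ≤ k → k < n → 2 ≤ #(M k)) (β : ℕ) :
    ∃ f : ℕ → ℕ, f n = β ∧ IsPathColoring M m n f := by
  induction n, hmn using Nat.le_induction generalizing β with
  | base => exact ⟨fun _ => β, rfl, fun k hmk hkm => absurd hkm (by omega)⟩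
  | succ n hmn ih =>
    obtain ⟨x, hx, hxβ⟩ := exists_mem_ne (hM n hmn (by omega)) β
    obtain ⟨f, hfn, hf⟩ := ih (fun k hmk hkn => hM k hmk (by omega)) x
    refine ⟨update f (n + 1) β, update_self .., fun k hmk hkn => ?_⟩
    rw [update_of_ne (by omega)]
    rcases (Nat.lt_succ_iff.1 hkn).lt_or_eq with hk | rfl
    · rw [update_of_ne (by omega)]
      exact hf k hmk hk
    · rw [update_self, hfn]
      exact ⟨hx, hxβ⟩

section BrokenWheel

variable {t : ℕ} {L : BWVert t → Finset ℕ} {a b cc : ℕ}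

def ThreeLeCardInterior (t : ℕ) (L : BWVert t → Finset ℕ) : Prop :=
  ∀ v : BWVert t, v ≠ some 0 → v ≠ none → v ≠ some (Fin.last (t + 1)) → 3 ≤ #(L v)

def bwRev (t : ℕ) : BWVert t → BWVert t := Option.map Fin.rev

@[simp]
lemma bwRev_none : bwRev t none = none := rfl

@[simp]
lemma bwRev_some (j : Fin (t + 2)) : bwRev t (some j) = some j.rev := rfl

lemma bwRev_involutive : Involutive (bwRev t) := by
  rintro (_ | j) <;> simp

lemma bwAdj_bwRev {v w : BWVert t} (h : bwAdj t v w) : bwAdj t (bwRev t v) (bwRev t w) := by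
  rcases v with _ | i <;> rcases w with _ | j
  · exact h
  · trivial
  · trivial
  · have hi := i.isLt
    have hj := j.isLt
    simp only [bwAdj, bwRev_some, Fin.val_rev] at h ⊢
    omega

lemma IsBWColoring.comp_bwRev {c : BWVert t → ℕ} (h : IsBWColoring t (L ∘ bwRev t) c) :
    IsBWColoring t L (c ∘ bwRev t) :=
  ⟨fun v => by simpa [bwRev_involutive v] using h.1 (bwRev t v),
    fun _ _ hvw => h.2 _ _ (bwAdj_bwRev hvw)⟩

lemma ExtendsToBW.exists_reversed (h : ExtendsToBW t (L ∘ bwRev t) a b cc) :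
    ∃ c, IsBWColoring t L c ∧
      c (some (Fin.last (t + 1))) = a ∧ c none = b ∧ c (some 0) = cc :=
  let ⟨c, hc, h0, hq, hl⟩ := h
  ⟨c ∘ bwRev t, hc.comp_bwRev, by simpa using h0, hq, by simpa using hl⟩

lemma ThreeLeCardInterior.comp_bwRev (hL : ThreeLeCardInterior t L) :
    ThreeLeCardInterior t (L ∘ bwRev t) := by
  intro v h0 hn hl
  apply hL <;> simpa [bwRev_involutive.eq_iff]

/-- The lists of the path `G - q` with the hub colour `b` deleted, indexed by `ℕ`: path vertex
`k ≤ t + 1` is `some (k : Fin (t + 2))`, the cast being taken mod `t + 2`. -/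
def pathLists (L : BWVert t → Finset ℕ) (b k : ℕ) : Finset ℕ :=
  (L (some (k : Fin (t + 2)))).erase b

@[simp]
lemma mem_pathLists {x k : ℕ} :
    x ∈ pathLists L b k ↔ x ≠ b ∧ x ∈ L (some (k : Fin (t + 2))) :=
  mem_erase

lemma ThreeLeCardInterior.three_le_card (hL : ThreeLeCardInterior t L) {k : ℕ} (hk : 1 ≤ k)
    (hkt : k ≤ t) :
    3 ≤ #(L (some (k : Fin (t + 2)))) := by
  have hval : ((k : Fin (t + 2)) : ℕ) = k := Fin.val_cast_of_lt (by omega)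
  apply hL <;> simp [Fin.ext_iff, hval] <;> omega

lemma two_le_card_pathLists (hL : ThreeLeCardInterior t L) {k : ℕ} (hk : 1 ≤ k)
    (hkt : k ≤ t) :
    2 ≤ #(pathLists L b k) :=
  le_trans (by have := hL.three_le_card hk hkt; omega) pred_card_le_card_erase

lemma extendsToBW_of_isPathColoring {f : ℕ → ℕ}
    (hf : IsPathColoring (pathLists L b) 0 (t + 1) f) (hb : b ∈ L none)
    (hcc : cc ∈ L (some (Fin.last (t + 1)))) (hbcc : b ≠ cc) (h0 : f 0 = a)
    (hlast : f (t + 1) = cc) : ExtendsToBW t L a b cc := by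
  have hvert : ∀ j : Fin (t + 2), f j ∈ L (some j) ∧ f j ≠ b := by
    intro j
    by_cases hj : j.val < t + 1
    · simpa [and_comm] using (hf j (Nat.zero_le _) hj).1
    · obtain rfl : j = Fin.last (t + 1) := Fin.ext (by simp; omega)
      simpa [hlast] using ⟨hcc, hbcc.symm⟩
  have hstep : ∀ i j : Fin (t + 2), i.val + 1 = j.val → f i ≠ f j := by
    intro i j hij
    rw [← hij]
    exact (hf i (Nat.zero_le _) (by omega)).2
  refine ⟨fun v => v.elim b (fun j => f j), ⟨?_, ?_⟩, by simpa using h0, rfl, hlast⟩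
  · rintro (_ | j)
    exacts [hb, (hvert j).1]
  · rintro (_ | i) (_ | j) hij
    · exact hij.elim
    · exact (hvert j).2.symm
    · exact (hvert i).2
    · rcases hij with hij | hij
      exacts [hstep i j hij, (hstep j i hij).symm]

lemma extendsToBW_of_not_mem_one (ht : 1 ≤ t) (hL : ThreeLeCardInterior t L)
    (ha : a ∈ L (some 0)) (hb : b ∈ L none) (hcc : cc ∈ L (some (Fin.last (t + 1))))
    (hab : a ≠ b) (hbcc : b ≠ cc) (h1 : a ∉ L (some 1)) : ExtendsToBW t L a b cc := by
  obtain ⟨f, hft, hf⟩ := exists_isPathColoring (M := pathLists L b) (by omega : 1 ≤ t + 1)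
    (fun k hk hkt => two_le_card_pathLists hL hk (by omega)) cc
  have hf1 : f 1 ∈ L (some 1) := by
    simpa using (mem_pathLists.1 (hf 1 le_rfl (by omega)).1).2
  refine extendsToBW_of_isPathColoring (f := update f 0 a)
    (hf.update (by simpa using ⟨hab, ha⟩) ?_) hb hcc hbcc (update_self ..) ?_
  · exact fun h => h1 (by rw [h]; exact hf1)
  · rw [update_of_ne (by omega), hft]

lemma extendsToBW_of_not_mem_two (ht : 2 ≤ t) (hL : ThreeLeCardInterior t L)
    (ha : a ∈ L (some 0)) (hb : b ∈ L none) (hcc : cc ∈ L (some (Fin.last (t + 1))))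
    (hab : a ≠ b) (hbcc : b ≠ cc) (h2 : b ∉ L (some 2)) : ExtendsToBW t L a b cc := by
  obtain ⟨f, hft, hf⟩ := exists_isPathColoring (M := pathLists L b) (by omega : 3 ≤ t + 1)
    (fun k hk hkt => two_le_card_pathLists hL (by omega) (by omega)) cc
  obtain ⟨z, hz, hza, hzb⟩ :=
    exists_mem_ne_ne (by simpa using hL.three_le_card (k := 1) le_rfl (by omega)) a b
  obtain ⟨y, hy, hy3, hyz⟩ :=
    exists_mem_ne_ne (by simpa using hL.three_le_card (k := 2) (by omega) ht) (f 3) z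
  have hyb : y ≠ b := by rintro rfl; exact h2 (by simpa using hy)
  refine extendsToBW_of_isPathColoring (f := update (update (update f 2 y) 1 z) 0 a)
    (((hf.update (by simpa using ⟨hyb, by simpa using hy⟩) hy3).update
      (by simpa using ⟨hzb, hz⟩) (by simpa using hyz.symm)).update
      (by simpa using ⟨hab, ha⟩) (by simpa using hza.symm)) hb hcc hbcc (update_self ..) ?_
  rw [update_of_ne (by omega), update_of_ne (by omega), update_of_ne (by omega), hft]

lemma extendsToBW_of_mem_one_not_mem_two {z : ℕ} (ht : 1 ≤ t) (hL : ThreeLeCardInterior t L)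
    (ha : a ∈ L (some 0)) (hb : b ∈ L none) (hcc : cc ∈ L (some (Fin.last (t + 1))))
    (hab : a ≠ b) (hbcc : b ≠ cc) (hz1 : z ∈ L (some 1)) (hza : z ≠ a) (hzb : z ≠ b)
    (hz2 : z ∉ L (some 2)) : ExtendsToBW t L a b cc := by
  obtain ⟨f, hft, hf⟩ := exists_isPathColoring (M := pathLists L b) (by omega : 2 ≤ t + 1)
    (fun k hk hkt => two_le_card_pathLists hL (by omega) (by omega)) cc
  have hf2 : f 2 ∈ L (some 2) := by
    rcases (show 2 < t + 1 ∨ t = 1 by omega) with h | rfl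
    · simpa using (mem_pathLists.1 (hf 2 le_rfl h).1).2
    · simpa [hft] using hcc
  refine extendsToBW_of_isPathColoring (f := update (update f 1 z) 0 a)
    ((hf.update (by simpa using ⟨hzb, hz1⟩) fun h => hz2 (by rw [h]; exact hf2)).update
      (by simpa using ⟨hab, ha⟩) (by simpa using hza.symm)) hb hcc hbcc (update_self ..) ?_
  rw [update_of_ne (by omega), update_of_ne (by omega), hft]

lemma mem_of_not_extendsToBW (ht : 2 ≤ t) (hL : ThreeLeCardInterior t L)
    (ha : a ∈ L (some 0)) (hb : b ∈ L none) (hcc : cc ∈ L (some (Fin.last (t + 1))))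
    (hab : a ≠ b) (hbcc : b ≠ cc) (h : ¬ ExtendsToBW t L a b cc) :
    a ∈ L (some 1) ∧ b ∈ L (some 2) ∧
      ∀ z ∈ L (some 1), z ≠ a → z ≠ b → z ∈ L (some 2) := by
  refine ⟨?_, ?_, fun z hz1 hza hzb => ?_⟩ <;> by_contra h' <;> apply h
  · exact extendsToBW_of_not_mem_one (by omega) hL ha hb hcc hab hbcc h'
  · exact extendsToBW_of_not_mem_two ht hL ha hb hcc hab hbcc h'
  · exact extendsToBW_of_mem_one_not_mem_two (by omega) hL ha hb hcc hab hbcc hz1 hza hzb h'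

lemma subset_inter_of_forall_not_extendsToBW (ht : 2 ≤ t) (hL : ThreeLeCardInterior t L)
    (hcard : 2 ≤ #(L (some 0)))
    (h : ∀ a ∈ L (some 0), ∃ b ∈ L none, b ≠ a ∧
      ∃ cc ∈ L (some (Fin.last (t + 1))), cc ≠ b ∧ ¬ ExtendsToBW t L a b cc) :
    L (some 0) ⊆ L (some 1) ∩ L (some 2) := by
  have key : ∀ a ∈ L (some 0), ∃ b, a ∈ L (some 1) ∧ b ∈ L (some 2) ∧
      ∀ z ∈ L (some 1), z ≠ a → z ≠ b → z ∈ L (some 2) := by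
    intro a ha
    obtain ⟨b, hb, hba, cc, hcc, hccb, hno⟩ := h a ha
    exact ⟨b, mem_of_not_extendsToBW ht hL ha hb hcc hba.symm hccb.symm hno⟩
  intro a ha
  obtain ⟨-, ha1, -, -⟩ := key a ha
  obtain ⟨a', ha', ha'a⟩ := exists_mem_ne hcard a
  obtain ⟨b', -, hb'2, hsub⟩ := key a' ha'
  refine mem_inter.2 ⟨ha1, ?_⟩
  by_cases hab' : a = b'
  · exact hab' ▸ hb'2
  · exact hsub a ha1 ha'a.symm hab'

end BrokenWheel

theorem bwheel_no_universal_color_general (t : ℕ) (L : BWVert t → Finset ℕ)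
    (hL : ∀ v : BWVert t, v ≠ some 0 → v ≠ none → v ≠ some (Fin.last (t + 1)) →
      3 ≤ (L v).card)
    (pi pother : BWVert t)
    (hends : (pi = some 0 ∧ pother = some (Fin.last (t + 1))) ∨
      (pi = some (Fin.last (t + 1)) ∧ pother = some 0))
    (hcard : 2 ≤ (L pi).card)
    (huniv : ∀ a ∈ L pi, ∃ b ∈ L (none : BWVert t), b ≠ a ∧
      ∃ cc ∈ L pother, cc ≠ b ∧
        ¬ ∃ c : BWVert t → ℕ, IsBWColoring t L c ∧
          c pi = a ∧ c none = b ∧ c pother = cc) :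
    t + 3 ≤ 4 ∨ ∃ x y : Fin (t + 2),
      x.val = (if pi = some 0 then 1 else t) ∧
      y.val = (if pi = some 0 then 2 else t - 1) ∧
      L pi ⊆ L (some x) ∩ L (some y) := by
  rcases le_or_gt t 1 with ht | ht
  · exact Or.inl (by omega)
  have hval2 : (2 : Fin (t + 2)).val = 2 := Fin.val_cast_of_lt (n := t + 2) (a := 2) (by omega)
  right
  rcases hends with ⟨rfl, rfl⟩ | ⟨rfl, rfl⟩
  · exact ⟨1, 2, by simp, by simpa using hval2,
      subset_inter_of_forall_not_extendsToBW ht hL hcard huniv⟩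
  · have hne : (some (Fin.last (t + 1)) : BWVert t) ≠ some 0 := by simp [Fin.ext_iff]
    refine ⟨Fin.rev 1, Fin.rev 2, by simp [hne], by rw [if_neg hne, Fin.val_rev, hval2]; omega,
      ?_⟩
    have huniv' : ∀ a ∈ (L ∘ bwRev t) (some 0), ∃ b ∈ (L ∘ bwRev t) none, b ≠ a ∧
        ∃ cc ∈ (L ∘ bwRev t) (some (Fin.last (t + 1))), cc ≠ b ∧
          ¬ ExtendsToBW t (L ∘ bwRev t) a b cc := by
      intro a ha
      obtain ⟨b, hb, hba, cc, hcc, hccb, hno⟩ := huniv a (by simpa using ha)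
      exact ⟨b, hb, hba, cc, by simpa using hcc, hccb, fun h => hno h.exists_reversed⟩
    simpa using subset_inter_of_forall_not_extendsToBW ht (ThreeLeCardInterior.comp_bwRev hL)
      (by simpa using hcard) huniv'

/-- Proposition 2.8(1) (the broken-wheel conclusion made explicit): `pi` is one endpoint
`p_i` of the principal path and `pother` the other endpoint `p_{1-i}`. If `|L(p_i)| ≥ 2`
and no color of `L(p_i)` is `(P, G)`-universal, then either `|V(G)| ≤ 4` or, letting
`p_i x y` be the initial 2-path of `G - q` starting at `p_i`, we have
`L(p_i) ⊆ L(x) ∩ L(y)`.  (If `pi = p₀` then `x, y` are the path vertices of indices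
`1, 2`; if `pi = p₁`, of indices `t, t - 1`.) -/
theorem bwheel_no_universal_color (t : ℕ) (L : BWVert t → Finset ℕ)
    (hL : ∀ v : BWVert t, v ≠ some 0 → v ≠ none → v ≠ some (Fin.last (t + 1)) →
      3 ≤ (L v).card)
    (h0 : (L (some 0)).Nonempty) (h1 : (L (some (Fin.last (t + 1)))).Nonempty)
    (pi pother : BWVert t)
    (hends : (pi = some 0 ∧ pother = some (Fin.last (t + 1))) ∨
      (pi = some (Fin.last (t + 1)) ∧ pother = some 0))
    (hcard : 2 ≤ (L pi).card)
    (huniv : ∀ a ∈ L pi, ∃ b ∈ L (none : BWVert t), b ≠ a ∧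
      ∃ cc ∈ L pother, cc ≠ b ∧
        ¬ ∃ c : BWVert t → ℕ, IsBWColoring t L c ∧
          c pi = a ∧ c none = b ∧ c pother = cc) :
    t + 3 ≤ 4 ∨ ∃ x y : Fin (t + 2),
      x.val = (if pi = some 0 then 1 else t) ∧
      y.val = (if pi = some 0 then 2 else t - 1) ∧
      L pi ⊆ L (some x) ∩ L (some y) :=
  bwheel_no_universal_color_general t L hL pi pother hends hcard huniv
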